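/- arXiv:1902.01708 — 2 statements merged into one kernel-verified Lean document; each statement's English description precedes it below -/
import Mathlib

section
/- Let S_t be a weighted translation operator with symbol φ and t > 0, and assume φ_t is essentially bounded below by a positive constant (so S_t is left invertible). Then S_t^*S_t is invertible in B(L²(ℝ₊)) and the Cauchy dual S_t' = S_t(S_t^*S_t)^{-1} is given by (S_t' f)(x) = φ_t(x)^{-1} f(x−t) for a.e. x ≥ t and (S_t' f)(x) = 0 for a.e. x < t. -/
open MeasureTheory Set ContinuousLinearMap

noncomputable section

namespace WTS

/-- Lebesgue measure restricted to `ℝ₊ = [0, ∞)`. -/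
def mu : Measure ℝ := volume.restrict (Set.Ici (0 : ℝ))

/-- The complex Hilbert space `L²(ℝ₊)`. -/
abbrev H : Type := Lp ℂ 2 mu

/-- A symbol: a function `φ` that is continuous and positive on `ℝ₊ = [0, ∞)`. -/
structure IsSymbol (φ : ℝ → ℝ) : Prop where
  cont : ContinuousOn φ (Set.Ici 0)
  pos : ∀ x ∈ Set.Ici (0 : ℝ), 0 < φ x

/-- The weight function `φ_t(x) = √(φ(x)/φ(x−t))` for `x ≥ t`, and `0` for `x < t`. -/
def wt (φ : ℝ → ℝ) (t : ℝ) (x : ℝ) : ℝ :=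
  if t ≤ x then Real.sqrt (φ x / φ (x - t)) else 0

/-- `S` is the weighted translation operator with symbol `φ` and translation `t`:
`(S f)(x) = φ_t(x) f(x−t)` for `x ≥ t` and `0` for `x < t`, where `φ_t` is essentially
bounded. -/
structure IsWT (φ : ℝ → ℝ) (t : ℝ) (S : H →L[ℂ] H) : Prop where
  bdd : ∃ C : ℝ, ∀ᵐ x ∂mu, wt φ t x ≤ C
  eval : ∀ f : H, ∀ᵐ x ∂mu,
    (S f : ℝ → ℂ) x = if t ≤ x then (wt φ t x : ℂ) * (f : ℝ → ℂ) (x - t) else 0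

/-- `φ_t` is essentially bounded below by a positive constant on `[t, ∞)`;
this is precisely left invertibility of the weighted translation operator. -/
def LowerBdd (φ : ℝ → ℝ) (t : ℝ) : Prop :=
  ∃ c : ℝ, 0 < c ∧ ∀ᵐ x ∂mu, t ≤ x → c ≤ wt φ t x

/-- `T` is the Cauchy dual of the weighted translation operator with symbol `φ` and
translation `t`: `(T f)(x) = φ_t(x)⁻¹ f(x−t)` for `x ≥ t` and `0` for `x < t`. -/
def IsWTDual (φ : ℝ → ℝ) (t : ℝ) (T : H →L[ℂ] H) : Prop :=
  ∀ f : H, ∀ᵐ x ∂mu,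
    (T f : ℝ → ℂ) x = if t ≤ x then ((wt φ t x : ℂ))⁻¹ * (f : ℝ → ℂ) (x - t) else 0

/-- The ordered product `S₁^{k₁} ⋯ S_d^{k_d}` of powers of a `d`-tuple of operators. -/
def tuplePow {d : ℕ} (S : Fin d → (H →L[ℂ] H)) (k : Fin d → ℕ) : H →L[ℂ] H :=
  (List.ofFn fun i => S i ^ k i).prod

/-- The joint kernel `E = ⋂ᵢ ker Sᵢ*` of the adjoint tuple. -/
def jointKer {d : ℕ} (S : Fin d → (H →L[ℂ] H)) : Set H :=
  {f : H | ∀ i, ContinuousLinearMap.adjoint (S i) f = 0}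

end WTS

/-! `S*S` is multiplication by `m(y) = φ_t(y+t)² = φ(y+t)/φ(y)`, which is essentially bounded
above and away from zero. A multiplication operator with such a symbol is bijective, its inverse
being multiplication by `1/m`; hence `S (S*S)⁻¹ f (x) = φ_t(x) f(x−t) / m(x−t) = φ_t(x)⁻¹ f(x−t)`. -/

section MultiplicationOperator

variable {α 𝕜 : Type*} [MeasurableSpace α] {μ : Measure α} [RCLike 𝕜]
  {p : ENNReal} {m : α → 𝕜} {c : ℝ}

lemma memLp_inv_mul_of_le_norm (hm : AEMeasurable m μ) (hc : 0 < c)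
    (hlb : ∀ᵐ x ∂μ, c ≤ ‖m x‖) (f : Lp 𝕜 p μ) :
    MemLp (fun x => (m x)⁻¹ * f x) p μ := by
  refine MemLp.of_le_mul (c := c⁻¹) (Lp.memLp f)
    (hm.inv.aestronglyMeasurable.mul (Lp.aestronglyMeasurable f)) ?_
  filter_upwards [hlb] with x hx
  rw [norm_mul, norm_inv]
  gcongr

variable [Fact (1 ≤ p)] {A : Lp 𝕜 p μ →L[𝕜] Lp 𝕜 p μ}

lemma exists_apply_eq_of_ae_eq_mul (hA : ∀ u, A u =ᵐ[μ] fun x => m x * u x)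
    (hm : AEMeasurable m μ) (hc : 0 < c) (hlb : ∀ᵐ x ∂μ, c ≤ ‖m x‖)
    (f : Lp 𝕜 p μ) : ∃ g : Lp 𝕜 p μ, A g = f ∧ g =ᵐ[μ] fun x => (m x)⁻¹ * f x := by
  have hg := memLp_inv_mul_of_le_norm hm hc hlb f
  refine ⟨hg.toLp _, Lp.ext ?_, hg.coeFn_toLp⟩
  filter_upwards [hA (hg.toLp _), hg.coeFn_toLp, hlb] with x hAx hgx hx
  rw [hAx, hgx, mul_inv_cancel_left₀ (norm_pos_iff.1 (hc.trans_le hx))]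

lemma bijective_of_ae_eq_mul (hA : ∀ u, A u =ᵐ[μ] fun x => m x * u x)
    (hm : AEMeasurable m μ) (hc : 0 < c) (hlb : ∀ᵐ x ∂μ, c ≤ ‖m x‖) :
    Function.Bijective A := by
  refine ⟨(injective_iff_map_eq_zero A).2 fun u hu => Lp.ext ?_,
    fun f => (exists_apply_eq_of_ae_eq_mul hA hm hc hlb f).imp fun _ => And.left⟩
  have hAu := hA u
  rw [hu] at hAu
  filter_upwards [hAu, hlb, Lp.coeFn_zero 𝕜 p μ] with x hAx hx h0
  rw [h0] at hAx ⊢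
  exact (mul_eq_zero.1 hAx.symm).resolve_left (norm_pos_iff.1 (hc.trans_le hx))

lemma ae_eq_inv_mul_of_mul_eq_one (hA : ∀ u, A u =ᵐ[μ] fun x => m x * u x)
    (hm : AEMeasurable m μ) (hc : 0 < c) (hlb : ∀ᵐ x ∂μ, c ≤ ‖m x‖)
    {T : Lp 𝕜 p μ →L[𝕜] Lp 𝕜 p μ} (hTA : T * A = 1) (f : Lp 𝕜 p μ) :
    T f =ᵐ[μ] fun x => (m x)⁻¹ * f x := by
  obtain ⟨g, rfl, hg⟩ := exists_apply_eq_of_ae_eq_mul hA hm hc hlb f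
  rwa [← mul_apply_eq_comp, hTA, one_apply_eq_self]

end MultiplicationOperator

namespace WTS

variable {φ : ℝ → ℝ} {t : ℝ}

lemma ae_comp_add (ht : 0 ≤ t) {P : ℝ → Prop} (h : ∀ᵐ x ∂mu, P x) :
    ∀ᵐ y ∂mu, P (y + t) := by
  have h' := (measurePreserving_add_right volume t).quasiMeasurePreserving.ae
    ((ae_restrict_iff' measurableSet_Ici).1 h)
  refine (ae_restrict_iff' measurableSet_Ici).2 ?_
  filter_upwards [h'] with y hy hy0
  exact hy (by simp only [mem_Ici] at hy0 ⊢; linarith)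

lemma ae_comp_sub {P : ℝ → Prop} (h : ∀ᵐ y ∂mu, P y) :
    ∀ᵐ x ∂mu, t ≤ x → P (x - t) := by
  have h' := (measurePreserving_sub_right volume t).quasiMeasurePreserving.ae
    ((ae_restrict_iff' measurableSet_Ici).1 h)
  refine ae_restrict_of_ae ?_
  filter_upwards [h'] with x hx hxt
  exact hx (sub_nonneg.2 hxt)

lemma integral_ite_comp_sub (ht : 0 ≤ t) (F : ℝ → ℂ) :
    ∫ x, (if t ≤ x then F (x - t) else 0) ∂mu = ∫ y, F y ∂mu := by
  have hind : (fun x => if t ≤ x then F (x - t) else 0) = (Ici t).indicator (F <| · - t) := by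
    ext x
    simp [Set.indicator]
  have hpre : (· - t) ⁻¹' Ici 0 = Ici t := by
    ext
    simp
  rw [mu, hind, setIntegral_indicator measurableSet_Ici,
    inter_eq_right.2 (Ici_subset_Ici.2 ht), ← hpre,
    (measurePreserving_sub_right volume t).setIntegral_preimage_emb
      (MeasurableEquiv.subRight t).measurableEmbedding]

lemma wt_nonneg (x : ℝ) : 0 ≤ wt φ t x := by
  unfold wt
  split_ifs
  exacts [Real.sqrt_nonneg _, le_rfl]

lemma IsSymbol.aemeasurable_wt_comp_add_sq (hφ : IsSymbol φ) (ht : 0 ≤ t) :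
    AEMeasurable (fun y => (wt φ t (y + t) : ℂ) ^ 2) mu := by
  refine (Complex.measurable_ofReal.comp_aemeasurable ?_).pow_const 2
  have hcont : ContinuousOn (fun y => Real.sqrt (φ (y + t) / φ y)) (Ici 0) :=
    ((hφ.cont.comp (continuous_add_const t).continuousOn
      fun y hy => by simp only [mem_Ici] at hy ⊢; linarith).div hφ.cont
      fun y hy => (hφ.pos y hy).ne').sqrt
  refine (hcont.aemeasurable measurableSet_Ici).congr ?_
  filter_upwards [ae_restrict_mem measurableSet_Ici] with y hy
  simp [wt, le_add_of_nonneg_left (mem_Ici.1 hy)]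

variable {S : H →L[ℂ] H}

lemma IsWT.inner_apply_eq_integral (hS : IsWT φ t S) (ht : 0 ≤ t) (u v : H) :
    inner ℂ (S u) (S v) = ∫ y, (wt φ t (y + t) : ℂ) ^ 2 * inner ℂ (u y) (v y) ∂mu := by
  rw [L2.inner_def,
    ← integral_ite_comp_sub ht fun y => (wt φ t (y + t) : ℂ) ^ 2 * inner ℂ (u y) (v y)]
  refine integral_congr_ae ?_
  filter_upwards [hS.eval u, hS.eval v] with x hu hv
  rw [hu, hv]
  split_ifs
  · simp only [RCLike.inner_apply, map_mul, Complex.conj_ofReal, sub_add_cancel]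
    ring
  · simp

lemma IsWT.adjoint_mul_self_apply_ae (hS : IsWT φ t S) (hφ : IsSymbol φ) (ht : 0 ≤ t)
    (u : H) : (adjoint S * S) u =ᵐ[mu] fun y => (wt φ t (y + t) : ℂ) ^ 2 * u y := by
  obtain ⟨C, hC⟩ := hS.bdd
  have hmem : MemLp (fun y => (wt φ t (y + t) : ℂ) ^ 2 * u y) 2 mu := by
    refine MemLp.of_le_mul (c := C ^ 2) (Lp.memLp u) ?_ ?_
    · exact (hφ.aemeasurable_wt_comp_add_sq ht).aestronglyMeasurable.mul
        (Lp.aestronglyMeasurable u)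
    · filter_upwards [ae_comp_add ht hC] with y hy
      rw [norm_mul, norm_pow, Complex.norm_real, Real.norm_of_nonneg (wt_nonneg _)]
      gcongr
      exact wt_nonneg _
  suffices (adjoint S * S) u = hmem.toLp _ from this ▸ hmem.coeFn_toLp
  refine ext_inner_right ℂ fun v => ?_
  rw [mul_apply_eq_comp, adjoint_inner_left, hS.inner_apply_eq_integral ht,
    L2.inner_def]
  refine integral_congr_ae ?_
  filter_upwards [hmem.coeFn_toLp] with y hy
  simp only [hy, RCLike.inner_apply, map_mul, map_pow, Complex.conj_ofReal]
  ring

lemma LowerBdd.exists_ae_le_norm_sq (hlb : LowerBdd φ t) (ht : 0 ≤ t) :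
    ∃ c : ℝ, 0 < c ∧ ∀ᵐ y ∂mu, c ≤ ‖(wt φ t (y + t) : ℂ) ^ 2‖ := by
  obtain ⟨c, hc, hle⟩ := hlb
  refine ⟨c ^ 2, by positivity, ?_⟩
  filter_upwards [ae_comp_add ht hle, ae_restrict_mem measurableSet_Ici] with y hy hy0
  rw [norm_pow, Complex.norm_real, Real.norm_of_nonneg (wt_nonneg _)]
  gcongr
  exact hy (le_add_of_nonneg_left hy0)

/-- if `φ_t` is essentially bounded below by a positive constant, then
`S_t* S_t` is invertible in `B(L²(ℝ₊))` and the Cauchy dual `S_t' = S_t (S_t* S_t)⁻¹`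
is given by `(S_t' f)(x) = φ_t(x)⁻¹ f(x−t)` for a.e. `x ≥ t` and `0` for a.e. `x < t`. -/
theorem statement_8 (φ : ℝ → ℝ) (hφ : IsSymbol φ) (t : ℝ) (ht : 0 < t)
    (S : H →L[ℂ] H) (hS : IsWT φ t S) (hlb : LowerBdd φ t) :
    IsUnit (ContinuousLinearMap.adjoint S * S) ∧
    ∀ T : H →L[ℂ] H,
      (ContinuousLinearMap.adjoint S * S) * T = 1 →
      T * (ContinuousLinearMap.adjoint S * S) = 1 →
      IsWTDual φ t (S * T) := by
  have hA := hS.adjoint_mul_self_apply_ae hφ ht.le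
  have hm := hφ.aemeasurable_wt_comp_add_sq ht.le
  obtain ⟨c, hc, hmc⟩ := hlb.exists_ae_le_norm_sq ht.le
  refine ⟨isUnit_iff_bijective.2 (bijective_of_ae_eq_mul hA hm hc hmc),
    fun T _ hTA f => ?_⟩
  filter_upwards [hS.eval (T f), ae_comp_sub (ae_eq_inv_mul_of_mul_eq_one hA hm hc hmc hTA f)]
    with x hx hTx
  rw [mul_apply_eq_comp, hx]
  split_ifs with hxt
  · rw [hTx hxt, sub_add_cancel, ← mul_assoc]
    congr 1
    rcases eq_or_ne (wt φ t x : ℂ) 0 with h | h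
    · simp [h]
    · field_simp
  · rfl

end WTS
end
end

section
/- Let S_𝐭 = (S_{1,t₁},…,S_{d,t_d}) be a toral left invertible commuting d-tuple of weighted translation operators with t₁,…,t_d > 0 and let S_𝐭' = (S_{1,t₁}',…,S_{d,t_d}') be its toral Cauchy dual tuple. Then S_𝐭' possesses the wandering subspace property: the closed linear span of ⋃_{k ∈ ℕ^d} S_{1,t₁}'^{k₁}⋯S_{d,t_d}'^{k_d} E equals L²(ℝ₊), where E is the joint kernel of the adjoint tuple S_𝐭^* (which coincides with the joint kernel of S_𝐭'^*). -/
open MeasureTheory Set ContinuousLinearMap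

noncomputable section

/-!
Let `t_j` be the smallest translation length. Every `f ∈ L²` vanishing on `[t_j, ∞)` lies in
the joint kernel `E`, since each `S_i` maps `L²` into functions vanishing on `[0, t_i)`.
If `g` is orthogonal to all `S_j'^n E`, testing against `S_j'^n 1_A` with `A ⊆ [0, t_j)` shows
that `W_n g`, where `W_n > 0` is the weight of `S_j'^n`, has zero integral over every
measurable subset of `[n t_j, (n + 1) t_j)`. Hence `g` vanishes on each of these intervals,
which cover `ℝ₊`.
-/

lemma List.prod_ofFn_eq_of_forall_ne_eq_one {M : Type*} [Monoid M] :
    ∀ {d : ℕ} (f : Fin d → M) (j : Fin d), (∀ i, i ≠ j → f i = 1) →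
      (List.ofFn f).prod = f j
  | 0, _, j, _ => j.elim0
  | d + 1, f, j, h => by
    rw [List.ofFn_succ, List.prod_cons]
    rcases Fin.eq_zero_or_eq_succ j with rfl | ⟨j, rfl⟩
    · rw [List.prod_eq_one, mul_one]
      simp only [List.mem_ofFn, forall_exists_index]
      rintro _ i rfl
      exact h i.succ (Fin.succ_ne_zero i)
    · rw [h 0 (Fin.succ_ne_zero j).symm, one_mul]
      exact List.prod_ofFn_eq_of_forall_ne_eq_one _ j fun i hi => h i.succ (by simpa using hi)

namespace WTS

instance : SigmaFinite mu := Restrict.sigmaFinite _ _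

lemma tuplePow_single {d : ℕ} (S : Fin d → (H →L[ℂ] H)) (j : Fin d) (n : ℕ) :
    tuplePow S (Pi.single j n) = S j ^ n := by
  rw [tuplePow, List.prod_ofFn_eq_of_forall_ne_eq_one _ j fun i hi => by simp [hi]]
  simp

lemma ae_comp_sub_of_ae {c : ℝ} {P : ℝ → Prop} (h : ∀ᵐ y ∂mu, P y) :
    ∀ᵐ x ∂mu, c ≤ x → P (x - c) := by
  rw [mu, ae_restrict_iff' measurableSet_Ici] at h
  have hsub : Measure.QuasiMeasurePreserving (fun x : ℝ => x - c) volume volume := by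
    simpa [sub_eq_add_neg] using
      (measurePreserving_add_right (volume : Measure ℝ) (-c)).quasiMeasurePreserving
  filter_upwards [ae_restrict_of_ae (hsub.ae h)] with x hx hcx
  exact hx (sub_nonneg.mpr hcx)

lemma ae_of_forall_ae_Ico {t : ℝ} (ht : 0 < t) {P : ℝ → Prop}
    (h : ∀ n : ℕ, ∀ᵐ x ∂mu, x ∈ Ico (n * t) (n * t + t) → P x) :
    ∀ᵐ x ∂mu, P x := by
  filter_upwards [ae_all_iff.mpr h, ae_restrict_mem measurableSet_Ici] with x hP hx
  have hx : 0 ≤ x / t := div_nonneg hx ht.le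
  refine hP ⌊x / t⌋₊ ⟨(le_div_iff₀ ht).mp (Nat.floor_le hx), ?_⟩
  rw [← add_one_mul, ← div_lt_iff₀ ht]
  exact Nat.lt_floor_add_one _

lemma wt_pos {φ : ℝ → ℝ} (hφ : IsSymbol φ) {t x : ℝ} (ht : 0 ≤ t) (hx : t ≤ x) :
    0 < wt φ t x := by
  rw [wt, if_pos hx]
  exact Real.sqrt_pos.mpr (div_pos (hφ.pos _ (ht.trans hx)) (hφ.pos _ (sub_nonneg.mpr hx)))

def dualWeight (φ : ℝ → ℝ) (t : ℝ) (n : ℕ) (x : ℝ) : ℝ :=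
  ∏ l ∈ Finset.range n, (wt φ t (x - l * t))⁻¹

lemma dualWeight_pos {φ : ℝ → ℝ} (hφ : IsSymbol φ) {t x : ℝ} (ht : 0 ≤ t) {n : ℕ}
    (hx : n * t ≤ x) : 0 < dualWeight φ t n x := by
  refine Finset.prod_pos fun l hl => inv_pos.mpr (wt_pos hφ ht ?_)
  have hl : (l : ℝ) + 1 ≤ n := by exact_mod_cast Finset.mem_range.mp hl
  nlinarith

lemma IsWT.adjoint_apply_eq_zero {φ : ℝ → ℝ} {t : ℝ} {S : H →L[ℂ] H} (hS : IsWT φ t S)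
    {f : H} (hf : ∀ᵐ x ∂mu, t ≤ x → f x = 0) : adjoint S f = 0 := by
  refine ext_inner_right ℂ fun v => ?_
  rw [adjoint_inner_left, inner_zero_left, L2.inner_def]
  refine integral_eq_zero_of_ae ?_
  filter_upwards [hS.eval v, hf] with x hSv hfx
  by_cases hx : t ≤ x
  · simp [hfx hx]
  · simp [hSv, if_neg hx]

lemma IsWTDual.pow_apply_ae {φ : ℝ → ℝ} {t : ℝ} {T : H →L[ℂ] H} (hT : IsWTDual φ t T)
    (ht : 0 ≤ t) (n : ℕ) (u : H) :
    ∀ᵐ x ∂mu, (T ^ n) u x =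
      if n * t ≤ x then (dualWeight φ t n x : ℂ) * u (x - n * t) else 0 := by
  induction n generalizing u with
  | zero =>
    filter_upwards [ae_restrict_mem measurableSet_Ici] with x hx
    simp [dualWeight, if_pos (show (0 : ℝ) ≤ x from hx)]
  | succ n ih =>
    filter_upwards [ih (T u), ae_comp_sub_of_ae (hT u)] with x hpow hTu
    rw [pow_succ, mul_apply_eq_comp, hpow]
    by_cases hn : n * t ≤ x
    · rw [if_pos hn, hTu hn, sub_sub, ← add_one_mul]
      by_cases hn' : t ≤ x - n * t
      · rw [if_pos hn', if_pos (by push_cast; linarith)]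
        simp only [dualWeight, Finset.prod_range_succ]
        push_cast
        ring
      · rw [if_neg hn', if_neg (by push_cast; linarith), mul_zero]
    · rw [if_neg hn, if_neg (by push_cast; nlinarith)]

lemma IsWTDual.pow_indicatorConstLp_ae_eq {φ : ℝ → ℝ} {t : ℝ} {T : H →L[ℂ] H}
    (hT : IsWTDual φ t T) (ht : 0 ≤ t) (n : ℕ) {A : Set ℝ} (hA : MeasurableSet A)
    (hA0 : A ⊆ Ici 0) (hAfin : mu A ≠ ⊤) :
    (T ^ n) (indicatorConstLp 2 hA hAfin (1 : ℂ)) =ᵐ[mu]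
      ((fun x => x - n * t) ⁻¹' A).indicator fun x => (dualWeight φ t n x : ℂ) := by
  filter_upwards [hT.pow_apply_ae ht n _,
    ae_comp_sub_of_ae (indicatorConstLp_coeFn (p := 2) (hs := hA) (hμs := hAfin) (c := (1 : ℂ)))]
    with x hpow hind
  rw [hpow]
  by_cases hn : n * t ≤ x
  · rw [if_pos hn, hind hn]
    by_cases hxA : x - n * t ∈ A <;> simp [hxA]
  · have hxA : x - n * t ∉ A := fun h => hn (by linarith [mem_Ici.mp (hA0 h)])
    simp [if_neg hn, hxA]

/-- Testing `g` against `T^n 1_A` with `A = B - n t` computes the integral of `W_n g` over `B`. -/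
lemma IsWTDual.setIntegral_dualWeight_mul_eq_zero {φ : ℝ → ℝ} {t s : ℝ} {T : H →L[ℂ] H}
    (hT : IsWTDual φ t T) (ht : 0 ≤ t) (n : ℕ) {g : H}
    (hg : ∀ f : H, (∀ᵐ x ∂mu, s ≤ x → f x = 0) → inner ℂ ((T ^ n) f) g = 0)
    {B : Set ℝ} (hBm : MeasurableSet B) (hBJ : B ⊆ Ico (n * t) (n * t + s)) :
    IntegrableOn (fun x => (dualWeight φ t n x : ℂ) * g x) B mu ∧
      ∫ x in B, (dualWeight φ t n x : ℂ) * g x ∂mu = 0 := by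
  set A := (fun y => y + n * t) ⁻¹' B
  have hAJ : A ⊆ Ico 0 s := fun y hy => by
    have := hBJ hy
    simp only [mem_Ico] at this ⊢
    constructor <;> linarith
  have hAfin : mu A ≠ ⊤ :=
    ((measure_mono hAJ).trans_lt ((Measure.restrict_apply_le _ _).trans_lt
      (by simp [Real.volume_Ico]))).ne
  have hA : MeasurableSet A := hBm.preimage (measurable_add_const (n * t))
  have hpre : (fun x => x - n * t) ⁻¹' A = B := by ext; simp [A]
  have hinner : (fun x => inner ℂ ((T ^ n) (indicatorConstLp 2 hA hAfin (1 : ℂ)) x) (g x))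
      =ᵐ[mu] B.indicator fun x => (dualWeight φ t n x : ℂ) * g x := by
    filter_upwards [hT.pow_indicatorConstLp_ae_eq ht n hA (fun y hy => (hAJ hy).1) hAfin]
      with x hx
    rw [hx, hpre]
    by_cases hxB : x ∈ B <;> simp [hxB, mul_comm]
  have hzero := hg (indicatorConstLp 2 hA hAfin (1 : ℂ)) (by
    filter_upwards [indicatorConstLp_coeFn (p := 2) (hs := hA) (hμs := hAfin) (c := (1 : ℂ))]
      with x hx hsx
    simp [hx, show x ∉ A from fun hxA => (hAJ hxA).2.not_ge hsx])
  rw [L2.inner_def] at hzero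
  rw [← integrable_indicator_iff hBm, ← integral_indicator hBm]
  exact ⟨(L2.integrable_inner _ _).congr hinner, (integral_congr_ae hinner).symm.trans hzero⟩

lemma IsWTDual.ae_eq_zero_on_Ico_of_orthogonal {φ : ℝ → ℝ} (hφ : IsSymbol φ) {t s : ℝ}
    {T : H →L[ℂ] H} (hT : IsWTDual φ t T) (ht : 0 ≤ t) (n : ℕ) {g : H}
    (hg : ∀ f : H, (∀ᵐ x ∂mu, s ≤ x → f x = 0) → inner ℂ ((T ^ n) f) g = 0) :
    ∀ᵐ x ∂mu, x ∈ Ico (n * t) (n * t + s) → g x = 0 := by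
  have hB {B : Set ℝ} (hBm : MeasurableSet B) :=
    hT.setIntegral_dualWeight_mul_eq_zero ht n hg (hBm.inter measurableSet_Ico)
      inter_subset_right
  have hJ : (fun x => (dualWeight φ t n x : ℂ) * g x)
      =ᵐ[mu.restrict (Ico (n * t) (n * t + s))] 0 := by
    refine ae_eq_zero_of_forall_setIntegral_eq_of_sigmaFinite (fun B hBm _ => ?_) fun B hBm _ => ?_
    · rw [IntegrableOn, Measure.restrict_restrict hBm]
      exact (hB hBm).1
    · rw [Measure.restrict_restrict hBm]
      exact (hB hBm).2
  filter_upwards [ae_imp_of_ae_restrict hJ] with x hx hxJ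
  exact (mul_eq_zero.mp (hx hxJ)).resolve_left
    (Complex.ofReal_ne_zero.mpr (dualWeight_pos hφ ht hxJ.1).ne')

theorem statement_11_general {d : ℕ} (φ : Fin d → ℝ → ℝ) (t : Fin d → ℝ)
    (S S' : Fin d → (H →L[ℂ] H))
    (hφ : ∀ i, IsSymbol (φ i)) (ht : ∀ i, 0 < t i)
    (hS : ∀ i, IsWT (φ i) (t i) (S i))
    (hS' : ∀ i, IsWTDual (φ i) (t i) (S' i)) :
    (Submodule.span ℂ
        (⋃ k : Fin d → ℕ, ⇑(tuplePow S' k) '' jointKer S)).topologicalClosure = ⊤ := by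
  rcases isEmpty_or_nonempty (Fin d) with hd | hd
  · refine eq_top_iff.mpr fun f _ => Submodule.le_topologicalClosure _ (Submodule.subset_span ?_)
    exact mem_iUnion.mpr ⟨0, f, fun i => isEmptyElim i, by simp [tuplePow]⟩
  obtain ⟨j, -, hj⟩ := Finset.univ.exists_min_image t Finset.univ_nonempty
  rw [Submodule.topologicalClosure_eq_top_iff, Submodule.eq_bot_iff]
  intro g hg
  have hperp : ∀ n : ℕ, ∀ f : H, (∀ᵐ x ∂mu, t j ≤ x → f x = 0) →
      inner ℂ ((S' j ^ n) f) g = 0 := by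
    intro n f hf
    have hfE : f ∈ jointKer S := fun i => (hS i).adjoint_apply_eq_zero (by
      filter_upwards [hf] with x hx hix using hx ((hj i (Finset.mem_univ i)).trans hix))
    refine (Submodule.mem_orthogonal _ g).mp hg _ (Submodule.subset_span ?_)
    exact mem_iUnion.mpr ⟨Pi.single j n, f, hfE, by rw [tuplePow_single]⟩
  refine Lp.eq_zero_iff_ae_eq_zero.mpr (ae_of_forall_ae_Ico (ht j) fun n => ?_)
  exact (hS' j).ae_eq_zero_on_Ico_of_orthogonal (hφ j) (ht j).le n (hperp n)

/-- the toral Cauchy dual tuple `S_𝐭'` of a toral left invertible commuting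
`d`-tuple `S_𝐭` possesses the wandering subspace property: the closed linear span of
`⋃_{k ∈ ℕ^d} S_𝐭'^k E` is all of `L²(ℝ₊)`, where `E` is the joint kernel of `S_𝐭*`. -/
theorem statement_11 {d : ℕ} (φ : Fin d → ℝ → ℝ) (t : Fin d → ℝ)
    (S S' : Fin d → (H →L[ℂ] H))
    (hφ : ∀ i, IsSymbol (φ i)) (ht : ∀ i, 0 < t i)
    (hS : ∀ i, IsWT (φ i) (t i) (S i))
    (hcomm : ∀ i j, S i * S j = S j * S i)
    (hlb : ∀ i, LowerBdd (φ i) (t i))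
    (hS' : ∀ i, IsWTDual (φ i) (t i) (S' i)) :
    (Submodule.span ℂ
        (⋃ k : Fin d → ℕ, ⇑(tuplePow S' k) '' jointKer S)).topologicalClosure = ⊤ :=
  statement_11_general φ t S S' hφ ht hS hS'

end WTS
end
end
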